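/- Let K be an augmented directed complex and g : K → M a morphism of augmented directed complexes. Define, with the conventions K_{-1} = M_{-1} = ℤ, K*_{-1} = M*_{-1} = ℕ, d_0 = e, g_{-1} = id_ℤ: (M//g)_0 = { (u_j)_{j≥-1} ∈ Π_{j≥-1} Hom(K_j, M_{j+1}) : (-1)^{j+1}(d_{j+1}u_j − u_{j-1}d_j) = e(u_{-1}(1))·g_j for all j ≥ 0 }, and (M//g)_i = Π_{j≥-1} Hom(K_j, M_{i+j+1}) for i ≥ 1, with differential d_i(u)_j = (-1)^{j+1}(d_{i+j+1}u_j − u_{j-1}d_j), augmentation e(u) = e(u_{-1}(1)), and positivity submonoids consisting of those (u_j) with u_j(K*_j) ⊆ M*_{i+j+1}. Then M//g is a well-defined augmented directed complex: d_1 lands in (M//g)_0, d_{i-1}∘d_i = 0 for i ≥ 2, and e∘d_1 = 0. -/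

import Mathlib

/-- An *augmented directed complex*: a chain complex of abelian groups in
non-negative degrees (`d n : X (n+1) →+ X n`), with an augmentation
`e : X 0 →+ ℤ` satisfying `e ∘ d₁ = 0`, and a positivity submonoid in each
degree. -/
structure ADC where
  X : ℕ → Type
  [inst : ∀ n, AddCommGroup (X n)]
  d : ∀ n, X (n + 1) →+ X n
  e : X 0 →+ ℤ
  dd : ∀ n x, d n (d (n + 1) x) = 0
  ed : ∀ x, e (d 0 x) = 0
  pos : ∀ n, AddSubmonoid (X n)

attribute [instance] ADC.inst

/-- Morphisms of augmented directed complexes: chain maps compatible with the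
augmentations and preserving the positivity submonoids. -/
structure ADCHom (K L : ADC) where
  f : ∀ n, K.X n →+ L.X n
  comm_d : ∀ n x, f n (K.d n x) = L.d n (f (n + 1) x)
  comm_e : ∀ x, L.e (f 0 x) = K.e x
  map_pos : ∀ n x, x ∈ K.pos n → f n x ∈ L.pos n

def ADCHom.id (K : ADC) : ADCHom K K where
  f _ := AddMonoidHom.id _
  comm_d _ _ := rfl
  comm_e _ := rfl
  map_pos _ _ hx := hx

def ADCHom.comp {K L M : ADC} (ψ : ADCHom L M) (φ : ADCHom K L) : ADCHom K M where
  f n := (ψ.f n).comp (φ.f n)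
  comm_d n x := by
    simp only [AddMonoidHom.comp_apply]
    rw [φ.comm_d, ψ.comm_d]
  comm_e x := by
    simp only [AddMonoidHom.comp_apply]
    rw [ψ.comm_e, φ.comm_e]
  map_pos n x hx := ψ.map_pos n _ (φ.map_pos n x hx)

/-- The carrier of the suspension of `K` : `ℤ` in degree `0` and `K.X n` in
degree `n+1`.  Equivalently, this is the family `K_{n-1}` (with `K_{-1} = ℤ`)
indexed by `n`. -/
def ADC.S (K : ADC) : ℕ → Type
  | 0 => ℤ
  | n + 1 => K.X n

instance ADC.instSAdd (K : ADC) : ∀ n, AddCommGroup (K.S n)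
  | 0 => inferInstanceAs (AddCommGroup ℤ)
  | n + 1 => inferInstanceAs (AddCommGroup (K.X n))

/-- The differential of the suspension : in lowest degree it is the
augmentation (`d₀ = e` convention), in higher degrees the differential of `K`. -/
def ADC.Sd (K : ADC) : ∀ n, K.S (n + 1) →+ K.S n
  | 0 => K.e
  | n + 1 => K.d n

/-- The positivity submonoids of the suspension : `ℕ ⊆ ℤ` in degree `0`. -/
noncomputable def ADC.Spos (K : ADC) : ∀ n, AddSubmonoid (K.S n)
  | 0 => AddSubmonoid.nonneg ℤ
  | n + 1 => K.pos n

/-- The suspension of a morphism (the identity of `ℤ` in degree `0`). -/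
def ADCHom.Sf {K L : ADC} (φ : ADCHom K L) : ∀ n, K.S n →+ L.S n
  | 0 => AddMonoidHom.id ℤ
  | n + 1 => φ.f n
/-- The underlying family of maps of a degree-`i` element of the slice
`M // g` : families `u_j : K_j → M_{i+j+1}` for `j ≥ -1`, encoded with
`K.S j = K_{j-1}` (so `K.S 0 = ℤ = K_{-1}`). -/
abbrev SlF (K M : ADC) (i : ℕ) : Type := ∀ j : ℕ, K.S j →+ M.S (j + i + 1)

def scast (M : ADC) {m n : ℕ} (h : m = n) : M.S m →+ M.S n where
  toFun x := h ▸ x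
  map_zero' := by subst h; rfl
  map_add' := by subst h; intro x y; rfl

/-- `j ↦ d_{i+j+1} ∘ u_j`. -/
def mainC (K M : ADC) (i : ℕ) (u : SlF K M i) (j : ℕ) : K.S j →+ M.S (j + i) :=
  (M.Sd (j + i)).comp (u j)

/-- `j ↦ u_{j-1} ∘ d_j` (with `u_{-2} = 0`). -/
def prevC (K M : ADC) (i : ℕ) (u : SlF K M i) : ∀ j : ℕ, K.S j →+ M.S (j + i)
  | 0 => 0
  | s + 1 => (scast M (show s + i + 1 = s + 1 + i by omega)).comp ((u s).comp (K.Sd s))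

/-- The differential of the slice `M // g` :
`d_i(u)_j = (-1)^{j+1} (d_{i+j+1} u_j - u_{j-1} d_j)`. -/
def Dsl (K M : ADC) (i : ℕ) (u : SlF K M (i + 1)) : SlF K M i := fun j =>
  ((-1 : ℤ) ^ j) • (mainC K M (i + 1) u j - prevC K M (i + 1) u j)

/-- The degree-`0` condition of the slice `M // g` :
`(-1)^{j+1}(d_{j+1} u_j - u_{j-1} d_j) = e(u_{-1}(1)) · g_j`. -/
def Cond (K M : ADC) (g : ADCHom K M) (u : SlF K M 0) : Prop :=
  ∀ j, ((-1 : ℤ) ^ j) • (mainC K M 0 u j - prevC K M 0 u j) =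
    M.e ((u 0) (1 : ℤ)) • g.Sf j

/-- Positivity for slice elements : `u_j(K*_j) ⊆ M*_{i+j+1}`. -/
def SlPos (K M : ADC) (i : ℕ) (u : SlF K M i) : Prop :=
  ∀ j x, x ∈ K.Spos j → u j x ∈ M.Spos (j + i + 1)

/-! Write `D` for the slice differential. For `u` of degree `i + 1`, both `d ∘ (D u)_j` and
`(D u)_{j-1} ∘ d_j` equal `(-1)^(j+1) d u_{j-1} d_j`, since `d ∘ d = 0` kills the other terms
(with `d_0 = e` in the lowest degree). Hence every component of `D (D u)` vanishes, the
degree-`0` condition for `D u` reads `0 = 0`, and `e ∘ D = 0` is the case `j = -1`. -/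

lemma ADC.Sd_Sd (M : ADC) : ∀ (n : ℕ) (y : M.S (n + 2)), M.Sd n (M.Sd (n + 1) y) = 0
  | 0, y => M.ed y
  | n + 1, y => M.dd n y

lemma scast_zsmul (M : ADC) {m n : ℕ} (h : m = n) (a : ℤ) (y : M.S m) :
    scast M h (a • y) = a • scast M h y := by
  subst h; rfl

lemma Sd_scast (M : ADC) {m n : ℕ} (h : m + 1 = n + 1) (y : M.S (m + 1)) :
    M.Sd n (scast M h y) = scast M (Nat.succ_injective h) (M.Sd m y) := by
  obtain rfl : m = n := Nat.succ_injective h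
  rfl

section Slice

variable (K M : ADC)

lemma prevC_Sd (i : ℕ) (u : SlF K M i) :
    ∀ (s : ℕ) (x : K.S (s + 1)), prevC K M i u s (K.Sd s x) = 0
  | 0, _ => rfl
  | s + 1, x => by
    show scast M _ (u s (K.Sd s (K.Sd (s + 1) x))) = 0
    rw [K.Sd_Sd, map_zero, map_zero]

lemma mainC_Dsl (i : ℕ) (u : SlF K M (i + 1)) (j : ℕ) (x : K.S j) :
    mainC K M i (Dsl K M i u) j x =
      (-1 : ℤ) ^ (j + 1) • M.Sd (j + i) (prevC K M (i + 1) u j x) := by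
  show M.Sd (j + i) (((-1 : ℤ) ^ j • (mainC K M (i + 1) u j - prevC K M (i + 1) u j)) x) = _
  rw [AddMonoidHom.smul_apply, map_zsmul, AddMonoidHom.sub_apply, map_sub,
    show M.Sd (j + i) (mainC K M (i + 1) u j x) = 0 from M.Sd_Sd (j + i) (u j x),
    zero_sub, smul_neg, ← neg_smul, pow_succ, mul_neg_one]

lemma prevC_Dsl (i : ℕ) (u : SlF K M (i + 1)) :
    ∀ (j : ℕ) (x : K.S j),
      prevC K M i (Dsl K M i u) j x =
        (-1 : ℤ) ^ (j + 1) • M.Sd (j + i) (prevC K M (i + 1) u j x)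
  | 0, _ => by simp [prevC]
  | s + 1, x => by
    show scast M _ (((-1 : ℤ) ^ s • (mainC K M (i + 1) u s - prevC K M (i + 1) u s))
        (K.Sd s x)) = (-1 : ℤ) ^ (s + 2) • M.Sd (s + 1 + i) (scast M _ (u s (K.Sd s x)))
    rw [AddMonoidHom.smul_apply, AddMonoidHom.sub_apply, prevC_Sd, sub_zero, scast_zsmul,
      Sd_scast, pow_succ, pow_succ, mul_neg_one, mul_neg_one, neg_neg]
    rfl

lemma mainC_Dsl_eq_prevC_Dsl (i : ℕ) (u : SlF K M (i + 1)) (j : ℕ) (x : K.S j) :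
    mainC K M i (Dsl K M i u) j x = prevC K M i (Dsl K M i u) j x := by
  rw [mainC_Dsl, prevC_Dsl]

lemma mainC_Dsl_sub_prevC_Dsl (i : ℕ) (u : SlF K M (i + 1)) (j : ℕ) :
    mainC K M i (Dsl K M i u) j - prevC K M i (Dsl K M i u) j = 0 := by
  ext x
  rw [AddMonoidHom.sub_apply, mainC_Dsl_eq_prevC_Dsl, sub_self, AddMonoidHom.zero_apply]

lemma Dsl_Dsl (i : ℕ) (u : SlF K M (i + 2)) : Dsl K M i (Dsl K M (i + 1) u) = 0 := by
  funext j
  show (-1 : ℤ) ^ j • (mainC K M (i + 1) (Dsl K M (i + 1) u) j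
    - prevC K M (i + 1) (Dsl K M (i + 1) u) j) = 0
  rw [mainC_Dsl_sub_prevC_Dsl, smul_zero]

lemma e_Dsl (u : SlF K M 1) : M.e (Dsl K M 0 u 0 (1 : ℤ)) = 0 :=
  mainC_Dsl_eq_prevC_Dsl K M 0 u 0 (1 : ℤ)

lemma cond_Dsl (g : ADCHom K M) (u : SlF K M 1) : Cond K M g (Dsl K M 0 u) := by
  intro j
  rw [mainC_Dsl_sub_prevC_Dsl, smul_zero, e_Dsl, zero_smul]

lemma slPos_zero (i : ℕ) : SlPos K M i 0 :=
  fun j _ _ => (M.Spos (j + i + 1)).zero_mem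

end Slice

lemma SlPos.add {K M : ADC} {i : ℕ} {u v : SlF K M i} (hu : SlPos K M i u)
    (hv : SlPos K M i v) : SlPos K M i (u + v) :=
  fun j x hx => (M.Spos (j + i + 1)).add_mem (hu j x hx) (hv j x hx)

/-- For `K` an augmented directed complex and `g : K → M` a
morphism of augmented directed complexes, the slice `M // g` (with the data
described above) is a well-defined augmented directed complex:
`d₁` lands in `(M//g)₀` (i.e. the degree-`0` condition holds for boundaries),
`d ∘ d = 0`, `e ∘ d₁ = 0`, and the positivity conditions define submonoids. -/
theorem statement14 (K M : ADC) (g : ADCHom K M) :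
    (∀ u : SlF K M 1, Cond K M g (Dsl K M 0 u)) ∧
    (∀ (i : ℕ) (u : SlF K M (i + 2)), Dsl K M i (Dsl K M (i + 1) u) = 0) ∧
    (∀ u : SlF K M 1, M.e (((Dsl K M 0 u) 0) (1 : ℤ)) = 0) ∧
    (∀ i : ℕ, SlPos K M i 0) ∧
    (∀ (i : ℕ) (u v : SlF K M i),
      SlPos K M i u → SlPos K M i v → SlPos K M i (u + v)) :=
  ⟨cond_Dsl K M g, Dsl_Dsl K M, e_Dsl K M, slPos_zero K M, fun _ _ _ => SlPos.add⟩
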